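/- Let G = (V,E) be a finite graph with an edge {x,y} such that ν(G) = (d_x + d_y)/2 − 1. Then every neighbour of x other than y is a neighbour of y and vice versa, i.e., S₁(x) \ {y} = S₁(y) \ {x}; in particular d_x = d_y. -/

import Mathlib

open Finset

variable {V : Type*} [Fintype V] {W : Type*} [Fintype W]

open scoped Classical in
noncomputable def magEnergy (G : SimpleGraph V) (σ : V → V → ℂ) (f : V → ℂ) : ℝ :=
  (1/2) * ∑ x : V, ∑ y : V, if G.Adj x y then ‖f x - σ x y * f y‖ ^ 2 else 0

noncomputable def magDenom (f : V → ℂ) : ℝ := ∑ x : V, ‖f x‖ ^ 2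

noncomputable def lambda1 (G : SimpleGraph V) (σ : V → V → ℂ) : ℝ :=
  sInf { r : ℝ | ∃ f : V → ℂ, f ≠ 0 ∧ r = magEnergy G σ f / magDenom f }

def IsMagPotential (G : SimpleGraph V) (σ : V → V → ℂ) : Prop :=
  (∀ x y, G.Adj x y → ‖σ x y‖ = 1) ∧
  (∀ x y, G.Adj x y → σ y x = (σ x y)⁻¹)

noncomputable def magHeight (G : SimpleGraph V) : ℝ :=
  sSup { r : ℝ | ∃ σ : V → V → ℂ, IsMagPotential G σ ∧ r = lambda1 G σ }

open scoped Classical in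
noncomputable def magLap (G : SimpleGraph V) (σ : V → V → ℂ) (f : V → ℂ) : V → ℂ :=
  fun x => ∑ y : V, if G.Adj x y then f x - σ x y * f y else 0


/-! For any magnetic potential `σ` and a neighbour `z` of `x` that is not a neighbour of `y`,
test the Rayleigh quotient on the function supported on the path `y – x – z` with values
`f x = 1`, `f y = σ(y,x)`, `f z = ε σ(z,x)`. Writing
`‖f u - σ f v‖² = ‖f u‖² + ‖f v‖² - 2 Re (f u · conj (σ f v))`, its energy is
`d_x + d_y + d_z ε² - 2 - 2ε` and its squared norm `2 + ε²`, so the quotient lies strictly below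
`(d_x + d_y)/2 - 1` as soon as `d_z ε < 1`. Hence a maximal potential attaining this value
forces `S₁(x) \ {y} = S₁(y) \ {x}`. -/

open ComplexConjugate

theorem Fintype.sum_eq_add_add {α M : Type*} [Fintype α] [AddCommMonoid M] {f : α → M}
    (a b c : α) (hab : a ≠ b) (hac : a ≠ c) (hbc : b ≠ c)
    (h : ∀ x, x ≠ a → x ≠ b → x ≠ c → f x = 0) : ∑ x, f x = f a + f b + f c := by
  classical
  rw [← Finset.sum_subset (subset_univ {a, b, c}) fun x _ hx =>
      h x (by grind) (by grind) (by grind),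
    sum_insert (by simp [hab, hac]), sum_pair hbc, add_assoc]

namespace IsMagPotential

variable {U : Type*} {G : SimpleGraph U} {σ : U → U → ℂ}

theorem normSq_eq_one (hσ : IsMagPotential G σ) {u v : U} (h : G.Adj u v) :
    Complex.normSq (σ u v) = 1 := by
  rw [Complex.normSq_eq_norm_sq, hσ.1 u v h, one_pow]

theorem mul_swap_eq_one (hσ : IsMagPotential G σ) {u v : U} (h : G.Adj u v) :
    σ u v * σ v u = 1 := by
  rw [hσ.2 u v h, mul_inv_cancel₀ (norm_ne_zero_iff.1 (by rw [hσ.1 u v h]; exact one_ne_zero))]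

end IsMagPotential

section MagneticRayleigh

variable (G : SimpleGraph V) (σ : V → V → ℂ)

theorem magEnergy_nonneg (f : V → ℂ) : 0 ≤ magEnergy G σ f := by
  unfold magEnergy
  refine mul_nonneg (by norm_num) (sum_nonneg fun u _ => sum_nonneg fun v _ => ?_)
  split_ifs <;> positivity

theorem magDenom_nonneg (f : V → ℂ) : 0 ≤ magDenom f :=
  sum_nonneg fun _ _ => by positivity

theorem lambda1_le_div (f : V → ℂ) (hf : f ≠ 0) :
    lambda1 G σ ≤ magEnergy G σ f / magDenom f :=
  csInf_le ⟨0, fun _ ⟨g, _, hr⟩ => hr ▸ div_nonneg (magEnergy_nonneg G σ g) (magDenom_nonneg g)⟩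
    ⟨f, hf, rfl⟩

theorem magEnergy_eq_sum_degree_sub [DecidableRel G.Adj] (hσ : ∀ u v, G.Adj u v → ‖σ u v‖ = 1)
    (f : V → ℂ) :
    magEnergy G σ f = ∑ u, G.degree u * ‖f u‖ ^ 2 -
      ∑ u, ∑ v, if G.Adj u v then (f u * conj (σ u v * f v)).re else 0 := by
  have hterm : ∀ u v, (if G.Adj u v then ‖f u - σ u v * f v‖ ^ 2 else 0) =
      (if G.Adj u v then ‖f u‖ ^ 2 else 0) + (if G.Adj v u then ‖f v‖ ^ 2 else 0) -
        2 * (if G.Adj u v then (f u * conj (σ u v * f v)).re else 0) := by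
    intro u v
    by_cases h : G.Adj u v
    · simp only [h, h.symm, if_true, Complex.sq_norm, Complex.normSq_sub, Complex.normSq_mul]
      rw [← Complex.sq_norm (σ u v), hσ u v h, one_pow, one_mul]
    · simp [h, G.adj_comm v u]
  have hdeg : ∀ u, ∑ v, (if G.Adj u v then ‖f u‖ ^ 2 else 0) = G.degree u * ‖f u‖ ^ 2 := by
    intro u
    simp only [G.degree_eq_sum_if_adj (R := ℝ) u, sum_mul, ite_mul, one_mul, zero_mul]
  -- `magEnergy` decides adjacency with the classical instance, not with `DecidableRel G.Adj`.
  have hE : magEnergy G σ f =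
      (1 / 2) * ∑ u, ∑ v, if G.Adj u v then ‖f u - σ u v * f v‖ ^ 2 else 0 := by
    unfold magEnergy
    congr!
  simp only [hE, hterm, sum_sub_distrib, sum_add_distrib, ← mul_sum]
  rw [sum_comm (f := fun u v => if G.Adj v u then ‖f v‖ ^ 2 else 0)]
  simp only [hdeg]
  ring

variable {G σ}

section pathTestFun

variable [DecidableEq V]

noncomputable def pathTestFun (σ : V → V → ℂ) (x y z : V) (ε : ℝ) : V → ℂ :=
  fun w => if w = x then 1 else if w = y then σ y x else if w = z then ε * σ z x else 0

variable {x y z : V} {ε : ℝ}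

omit [Fintype V] in
theorem pathTestFun_apply_center : pathTestFun σ x y z ε x = 1 := by
  simp [pathTestFun]

omit [Fintype V] in
theorem pathTestFun_apply_left (hxy : x ≠ y) : pathTestFun σ x y z ε y = σ y x := by
  simp [pathTestFun, hxy.symm]

omit [Fintype V] in
theorem pathTestFun_apply_right (hxz : x ≠ z) (hyz : y ≠ z) :
    pathTestFun σ x y z ε z = ε * σ z x := by
  simp [pathTestFun, hxz.symm, hyz.symm]

theorem sum_eq_add_add_of_pathTestFun_eq_zero {M : Type*} [AddCommMonoid M] {g : V → M}
    (hxy : x ≠ y) (hxz : x ≠ z) (hyz : y ≠ z) (hg : ∀ w, pathTestFun σ x y z ε w = 0 → g w = 0) :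
    ∑ w, g w = g x + g y + g z :=
  Fintype.sum_eq_add_add x y z hxy hxz hyz fun w hwx hwy hwz =>
    hg w (by simp [pathTestFun, hwx, hwy, hwz])

theorem magDenom_pathTestFun (hσ : IsMagPotential G σ) (hxy : G.Adj x y) (hxz : G.Adj x z)
    (hyz : y ≠ z) : magDenom (pathTestFun σ x y z ε) = 2 + ε ^ 2 := by
  rw [magDenom, sum_eq_add_add_of_pathTestFun_eq_zero (σ := σ) (ε := ε) hxy.ne hxz.ne hyz
      (by intro w hw; simp [hw]),
    pathTestFun_apply_center, pathTestFun_apply_left hxy.ne, pathTestFun_apply_right hxz.ne hyz,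
    norm_mul, hσ.1 y x hxy.symm, hσ.1 z x hxz.symm, Complex.norm_real, Real.norm_eq_abs]
  simp only [norm_one, mul_one, one_pow, sq_abs]
  ring

theorem magEnergy_pathTestFun [DecidableRel G.Adj] (hσ : IsMagPotential G σ) (hxy : G.Adj x y)
    (hxz : G.Adj x z) (hyz : ¬ G.Adj y z) (hyz' : y ≠ z) :
    magEnergy G σ (pathTestFun σ x y z ε) =
      G.degree x + G.degree y + G.degree z * ε ^ 2 - 2 - 2 * ε := by
  set f := pathTestFun σ x y z ε
  have hfx : f x = 1 := pathTestFun_apply_center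
  have hfy : f y = σ y x := pathTestFun_apply_left hxy.ne
  have hfz : f z = ε * σ z x := pathTestFun_apply_right hxz.ne hyz'
  have hsum {g : V → ℝ} (hg : ∀ w, f w = 0 → g w = 0) : ∑ w, g w = g x + g y + g z :=
    sum_eq_add_add_of_pathTestFun_eq_zero hxy.ne hxz.ne hyz' hg
  have hrow (u : V) := hsum (g := fun v => if G.Adj u v then (f u * conj (σ u v * f v)).re else 0)
    (by intro w hw; simp [hw])
  rw [magEnergy_eq_sum_degree_sub G σ hσ.1 f, hsum (by intro w hw; simp [hw]),
    hsum (by intro w hw; simp [hw])]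
  simp only [hrow]
  have hnx : ‖f x‖ ^ 2 = 1 := by rw [hfx, norm_one, one_pow]
  have hny : ‖f y‖ ^ 2 = 1 := by rw [hfy, hσ.1 y x hxy.symm, one_pow]
  have hnz : ‖f z‖ ^ 2 = ε ^ 2 := by
    rw [hfz, norm_mul, hσ.1 z x hxz.symm, mul_one, Complex.norm_real, Real.norm_eq_abs, sq_abs]
  have hcxy : (f x * conj (σ x y * f y)).re = 1 := by
    rw [hfx, hfy, hσ.mul_swap_eq_one hxy, map_one, mul_one, Complex.one_re]
  have hcyx : (f y * conj (σ y x * f x)).re = 1 := by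
    rw [hfx, hfy, mul_one, Complex.mul_conj, Complex.ofReal_re, hσ.normSq_eq_one hxy.symm]
  have hcxz : (f x * conj (σ x z * f z)).re = ε := by
    rw [hfx, hfz, mul_left_comm, hσ.mul_swap_eq_one hxz, mul_one, one_mul, Complex.conj_ofReal,
      Complex.ofReal_re]
  have hczx : (f z * conj (σ z x * f x)).re = ε := by
    rw [hfx, hfz, mul_one, mul_assoc, Complex.mul_conj, hσ.normSq_eq_one hxz.symm,
      Complex.ofReal_one, mul_one, Complex.ofReal_re]
  simp only [hxy, hxy.symm, hxz, hxz.symm, hyz, G.adj_comm z y, SimpleGraph.irrefl, if_true,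
    if_false, hnx, hny, hnz, hcxy, hcyx, hcxz, hczx]
  ring

end pathTestFun

theorem lambda1_lt_of_adj_of_not_adj [DecidableRel G.Adj] {x y z : V} (hσ : IsMagPotential G σ)
    (hxy : G.Adj x y) (hxz : G.Adj x z) (hyz : ¬ G.Adj y z) (hyz' : y ≠ z) :
    lambda1 G σ < ((G.degree x : ℝ) + G.degree y) / 2 - 1 := by
  classical
  set ε : ℝ := 1 / (G.degree z + 1)
  have hε : 0 < ε := by positivity
  have hdε : G.degree z * ε = 1 - ε := by
    simp only [ε]
    field_simp
    ring
  have hdeg : (2 : ℝ) ≤ G.degree x + G.degree y := by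
    have hx := G.degree_pos_iff_exists_adj x |>.2 ⟨y, hxy⟩
    have hy := G.degree_pos_iff_exists_adj y |>.2 ⟨x, hxy.symm⟩
    have : 2 ≤ G.degree x + G.degree y := by omega
    exact_mod_cast this
  have hf : pathTestFun σ x y z ε ≠ 0 := fun h0 => by
    simpa [pathTestFun_apply_center] using congrFun h0 x
  calc lambda1 G σ ≤ magEnergy G σ (pathTestFun σ x y z ε) / magDenom (pathTestFun σ x y z ε) :=
        lambda1_le_div G σ _ hf
    _ < ((G.degree x : ℝ) + G.degree y) / 2 - 1 := by
        rw [magEnergy_pathTestFun hσ hxy hxz hyz hyz', magDenom_pathTestFun hσ hxy hxz hyz',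
          div_lt_iff₀ (by positivity)]
        nlinarith [mul_nonneg (sub_nonneg.2 hdeg) (sq_nonneg ε)]

end MagneticRayleigh

theorem SimpleGraph.degree_eq_of_adj_of_forall_adj_iff {G : SimpleGraph V} [DecidableRel G.Adj]
    {x y : V} (hxy : G.Adj x y) (h : ∀ z, z ≠ x → z ≠ y → (G.Adj x z ↔ G.Adj y z)) :
    G.degree x = G.degree y := by
  classical
  have hN : (G.neighborFinset x).erase y = (G.neighborFinset y).erase x := by
    ext w
    simp only [mem_erase, mem_neighborFinset]
    exact ⟨fun ⟨hwy, hxw⟩ => ⟨hxw.ne', (h w hxw.ne' hwy).1 hxw⟩,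
      fun ⟨hwx, hyw⟩ => ⟨hyw.ne', (h w hwx hyw.ne').2 hyw⟩⟩
  rw [← card_neighborFinset_eq_degree, ← card_neighborFinset_eq_degree,
    ← card_erase_add_one ((mem_neighborFinset G x y).2 hxy),
    ← card_erase_add_one ((mem_neighborFinset G y x).2 hxy.symm), hN]

theorem maximal_edge_bound_rigidity (G : SimpleGraph V) [DecidableRel G.Adj]
    (x y : V) (hxy : G.Adj x y)
    (hatt : ∃ σ : V → V → ℂ, IsMagPotential G σ ∧ lambda1 G σ = magHeight G)
    (h : magHeight G = ((G.degree x : ℝ) + G.degree y) / 2 - 1) :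
    (∀ z : V, z ≠ x → z ≠ y → (G.Adj x z ↔ G.Adj y z)) ∧
    G.degree x = G.degree y := by
  obtain ⟨σ, hσ, hlam⟩ := hatt
  have hnot_lt : ¬ lambda1 G σ < ((G.degree x : ℝ) + G.degree y) / 2 - 1 := by
    rw [hlam, h]
    exact lt_irrefl _
  have hadj (z : V) (hzx : z ≠ x) (hzy : z ≠ y) : G.Adj x z ↔ G.Adj y z := by
    refine ⟨fun hxz => ?_, fun hyz => ?_⟩ <;> by_contra hnot
    · exact hnot_lt (lambda1_lt_of_adj_of_not_adj hσ hxy hxz hnot hzy.symm)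
    · rw [add_comm] at hnot_lt
      exact hnot_lt (lambda1_lt_of_adj_of_not_adj hσ hxy.symm hyz hnot hzx.symm)
  exact ⟨hadj, G.degree_eq_of_adj_of_forall_adj_iff hxy hadj⟩
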